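/- Let (W,S) be a Coxeter system acting on the geometric representation V = ⊕_{s∈S} ℝα_s^∨ with simple roots α_s, and let I ⊆ S with Δ_I = {α_r : r ∈ I} and Φ_I the set of roots lying in the span of Δ_I. For x ∈ ᴵW and s ∈ S, the following are equivalent: (i) xs ∉ ᴵW; (ii) x(α_s) ∈ Δ_I; (iii) x(α_s) ∈ Φ_I. -/

import Mathlib

/-- The set of minimal length representatives for the right cosets `W_I \ W`. -/
def minCosetReps {B W : Type*} [Group W] {M : CoxeterMatrix B} (cs : CoxeterSystem M W)
    (I : Set B) : Set W :=
  {w : W | ∀ i ∈ I, cs.length w < cs.length (cs.simple i * w)}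

/-- The coefficients of the standard bilinear form of the geometric representation:
`B(α_i, α_j) = -cos (π / m_{ij})`, with the convention `π/∞ = 0` (here `m_{ij} = 0`
encodes `∞`). -/
noncomputable def geomK {B : Type*} (M : CoxeterMatrix B) (i j : B) : ℝ :=
  if M i j = 0 then -1 else -Real.cos (Real.pi / (M i j : ℝ))

/-- The pairing `B(v, α_i)` of a vector of the geometric representation with
the simple root `α_i`. -/
noncomputable def geomPair {B : Type*} (M : CoxeterMatrix B) (v : B →₀ ℝ) (i : B) : ℝ :=
  v.sum fun j a => a * geomK M j i

/-!
Everything rests on the positivity of roots: if `ℓ(ws) > ℓ(w)` then `w(α_s)` has nonnegative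
coordinates. By induction on `ℓ(w)`: pick a right descent `t` of `w` and strip letters
`t, s, t, …` off the right of `w` as long as they are descents; this writes `w = v · (⋯ s t)`
with `ℓ(v) + k = ℓ(w)`, `v` having neither `s` nor `t` as a right descent, and `k < m_{st}` by the
braid relation. The dihedral word sends `α_s` to a combination of `α_s` and `α_t` whose
coefficients are the Chebyshev values `U_k(c)`, `U_{k-1}(c)` at `c = cos (π / m_{st})` (or `c = 1`),
nonnegative because `U_n(cos θ) sin θ = sin ((n+1) θ)`.

For `x ∈ ᴵW`, `x⁻¹` maps nonnegative combinations of `Δ_I` to nonnegative vectors. If `xs ∉ ᴵW`,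
some `sᵢ` is a left descent of `xs`, so the positive root `x⁻¹(αᵢ)` is made negative by `s`;
hence it is a nonnegative multiple of `α_s`, and invariance of the bilinear form forces it to be
`α_s`.
Conversely, a root `x(α_s)` in the span of `Δ_I` is either positive or negative; pulling it back
by `xs` or by `x` respectively would give the negative root `-α_s` as a nonnegative vector.
-/

open Finsupp

section Form

variable {B : Type*} (M : CoxeterMatrix B)

theorem geomK_comm (i j : B) : geomK M i j = geomK M j i := by
  rw [geomK, geomK, M.symmetric]

@[simp]
theorem geomK_self (i : B) : geomK M i i = 1 := by
  simp [geomK]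

noncomputable def geomForm : LinearMap.BilinForm ℝ (B →₀ ℝ) :=
  linearCombination ℝ fun i => linearCombination ℝ (geomK M i)

@[simp]
theorem geomForm_single_single (i j : B) (a b : ℝ) :
    geomForm M (single i a) (single j b) = a * b * geomK M i j := by
  simp [geomForm, mul_assoc]

theorem geomForm_comm (u v : B →₀ ℝ) : geomForm M u v = geomForm M v u := by
  suffices geomForm M = (geomForm M).flip from congr($this u v)
  ext i j
  simp [geomK_comm M i j]

theorem geomForm_single_one (v : B →₀ ℝ) (i : B) :
    geomForm M v (single i 1) = geomPair M v i := by
  induction v using Finsupp.induction_linear with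
  | zero => simp [geomPair]
  | add f g hf hg =>
    rw [map_add, LinearMap.add_apply, hf, hg, geomPair, geomPair, geomPair,
      sum_add_index' (by simp) fun _ _ _ => add_mul _ _ _]
  | single j a => simp [geomPair]

end Form

open Polynomial Chebyshev Real in
theorem Polynomial.Chebyshev.U_real_eval_cos_pi_div_nonneg {m : ℕ} (hm : 2 ≤ m) {n : ℤ}
    (hn₀ : -1 ≤ n) (hn : n + 1 ≤ m) : 0 ≤ (U ℝ n).eval (cos (π / m)) := by
  have hm' : (2 : ℝ) ≤ m := by exact_mod_cast hm
  have hθ₀ : 0 < π / m := by positivity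
  have hsin : 0 < sin (π / m) :=
    sin_pos_of_pos_of_lt_pi hθ₀ (div_lt_self pi_pos (by linarith))
  have hn' : (0 : ℝ) ≤ n + 1 := by exact_mod_cast (by omega : (0 : ℤ) ≤ n + 1)
  have hnm : ((n : ℝ) + 1) * (π / m) ≤ π := by
    rw [mul_div_assoc', div_le_iff₀ (by positivity), mul_comm]
    gcongr
    exact_mod_cast hn
  have hU := U_real_cos (π / m) n
  have hsin_mul := sin_nonneg_of_nonneg_of_le_pi (by positivity) hnm
  nlinarith

theorem eval_U_neg_geomK_nonneg {B : Type*} {M : CoxeterMatrix B} {s t : B} (hst : s ≠ t)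
    {n : ℤ} (hn₀ : -1 ≤ n) (hn : M s t = 0 ∨ n + 1 ≤ (M s t : ℤ)) :
    0 ≤ (Polynomial.Chebyshev.U ℝ n).eval (-geomK M s t) := by
  by_cases hM₀ : M s t = 0
  · simpa [geomK, hM₀, Polynomial.Chebyshev.U_eval_one] using
      (by exact_mod_cast (by omega : (0 : ℤ) ≤ n + 1) : (0 : ℝ) ≤ n + 1)
  · have hM₂ : 2 ≤ M s t := by have := M.off_diagonal s t hst; omega
    simpa [geomK, hM₀] using
      Polynomial.Chebyshev.U_real_eval_cos_pi_div_nonneg hM₂ hn₀ (hn.resolve_left hM₀)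

namespace CoxeterSystem

variable {B W : Type*} [Group W] {M : CoxeterMatrix B} (cs : CoxeterSystem M W)

theorem exists_eq_mul_wordProd_alternatingWord (w : W) {s : B} (t : B)
    (hs : ¬cs.IsRightDescent w s) :
    ∃ (v : W) (k : ℕ), w = v * cs.wordProd (alternatingWord s t k) ∧
      cs.length v + k = cs.length w ∧ ¬cs.IsRightDescent v s ∧ ¬cs.IsRightDescent v t := by
  induction hw : cs.length w using Nat.strong_induction_on generalizing w s t with
  | _ n ih =>
    by_cases ht : cs.IsRightDescent w t
    · have hlen : cs.length (w * cs.simple t) + 1 = n := hw ▸ cs.isRightDescent_iff.mp ht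
      obtain ⟨v, k, hv, hlen', hvt, hvs⟩ := ih _ (by omega) (w * cs.simple t) s
        (cs.isRightDescent_iff_not_isRightDescent_mul.mp ht) rfl
      refine ⟨v, k + 1, ?_, by omega, hvs, hvt⟩
      rw [alternatingWord_succ, wordProd_concat, ← mul_assoc, ← hv,
        simple_mul_simple_cancel_right]
    · exact ⟨w, 0, by simp [alternatingWord], by simp [hw], hs, ht⟩

theorem eq_zero_or_lt_of_eq_mul_wordProd_alternatingWord {w v : W} {s t : B} {k : ℕ}
    (hs : ¬cs.IsRightDescent w s) (hw : w = v * cs.wordProd (alternatingWord s t k))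
    (hlen : cs.length v + k = cs.length w) : M s t = 0 ∨ k < M s t := by
  have hk : k ≤ cs.length (cs.wordProd (alternatingWord s t k)) := by
    have := cs.length_mul_le v (cs.wordProd (alternatingWord s t k))
    rw [← hw] at this
    omega
  by_contra! h
  obtain ⟨hM, hMk⟩ := h
  rcases hMk.lt_or_eq with hlt | rfl
  · refine cs.not_isReduced_alternatingWord s t hM hlt ?_
    have := cs.length_wordProd_le (alternatingWord s t k)
    simp only [IsReduced, length_alternatingWord] at this ⊢
    omega
  · obtain ⟨m, hm⟩ := Nat.exists_eq_succ_of_ne_zero hM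
    have hws : w * cs.simple s = v * cs.wordProd (alternatingWord s t m) := by
      rw [hw, ← braidWord, wordProd_braidWord_eq, braidWord, M.symmetric t s, hm,
        alternatingWord_succ, wordProd_concat, ← mul_assoc, simple_mul_simple_cancel_right]
    have := cs.length_mul_le v (cs.wordProd (alternatingWord s t m))
    have := cs.length_wordProd_le (alternatingWord s t m)
    rw [length_alternatingWord, ← hws] at *
    rw [cs.not_isRightDescent_iff] at hs
    omega

end CoxeterSystem

theorem Finsupp.map_nonneg_of_mem_supported {ι N : Type*} [AddCommMonoid N] [PartialOrder N]
    [IsOrderedAddMonoid N] [Module ℝ N] [PosSMulMono ℝ N] (f : (ι →₀ ℝ) →ₗ[ℝ] N) {I : Set ι}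
    (hf : ∀ i ∈ I, 0 ≤ f (single i 1)) {v : ι →₀ ℝ} (hvI : v ∈ supported ℝ ℝ I) (hv : 0 ≤ v) :
    0 ≤ f v := by
  rw [← v.sum_single, map_finsuppSum]
  refine Finset.sum_nonneg fun i hi => ?_
  change 0 ≤ f (single i (v i))
  rw [← smul_single_one, map_smul]
  exact smul_nonneg (hv i) (hf i (hvI hi))

theorem mem_minCosetReps_iff {B W : Type*} [Group W] {M : CoxeterMatrix B}
    {cs : CoxeterSystem M W} {I : Set B} {x : W} :
    x ∈ minCosetReps cs I ↔ ∀ i ∈ I, ¬cs.IsLeftDescent x i := by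
  refine forall₂_congr fun i _ => ?_
  rw [cs.not_isLeftDescent_iff]
  have := cs.length_simple_mul x i
  omega

def IsGeometricRepresentation {B W : Type*} [Group W] {M : CoxeterMatrix B}
    (cs : CoxeterSystem M W) (ρ : W →* ((B →₀ ℝ) ≃ₗ[ℝ] (B →₀ ℝ))) : Prop :=
  ∀ (i : B) (v : B →₀ ℝ), ρ (cs.simple i) v = v - (2 * geomPair M v i) • single i 1

namespace IsGeometricRepresentation

variable {B W : Type*} [Group W] {M : CoxeterMatrix B} {cs : CoxeterSystem M W}
  {ρ : W →* ((B →₀ ℝ) ≃ₗ[ℝ] (B →₀ ℝ))}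

theorem simple_apply (hρ : IsGeometricRepresentation cs ρ) (i : B) (v : B →₀ ℝ) :
    ρ (cs.simple i) v = v - (2 * geomForm M v (single i 1)) • single i 1 := by
  rw [hρ, geomForm_single_one]

theorem simple_apply_single (hρ : IsGeometricRepresentation cs ρ) (i j : B) :
    ρ (cs.simple i) (single j 1) = single j 1 - (2 * geomK M j i) • single i 1 := by
  simp [hρ.simple_apply]

theorem simple_apply_single_self (hρ : IsGeometricRepresentation cs ρ) (i : B) :
    ρ (cs.simple i) (single i 1) = -single i 1 := by
  rw [hρ.simple_apply_single, geomK_self, mul_one, two_smul, sub_add_cancel_left]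

theorem geomForm_simple_apply (hρ : IsGeometricRepresentation cs ρ) (i : B) (u v : B →₀ ℝ) :
    geomForm M (ρ (cs.simple i) u) (ρ (cs.simple i) v) = geomForm M u v := by
  simp only [hρ.simple_apply, map_sub, map_smul, LinearMap.sub_apply, LinearMap.smul_apply,
    smul_eq_mul, geomForm_single_single, geomK_self, geomForm_comm M (single i 1) v]
  ring

theorem geomForm_apply (hρ : IsGeometricRepresentation cs ρ) (w : W) (u v : B →₀ ℝ) :
    geomForm M (ρ w u) (ρ w v) = geomForm M u v := by
  obtain ⟨ω, rfl⟩ := cs.wordProd_surjective w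
  induction ω generalizing u v with
  | nil => simp
  | cons i ω ih =>
    simp only [cs.wordProd_cons, map_mul, LinearEquiv.mul_apply, hρ.geomForm_simple_apply, ih]

open Polynomial Chebyshev in
theorem wordProd_alternatingWord_apply_single (hρ : IsGeometricRepresentation cs ρ) (s t : B)
    (k : ℕ) :
    ρ (cs.wordProd (CoxeterSystem.alternatingWord s t k)) (single s 1) =
      (U ℝ k).eval (-geomK M s t) • single (if Even k then s else t) 1 +
        (U ℝ (k - 1)).eval (-geomK M s t) • single (if Even k then t else s) 1 := by
  induction k with
  | zero => simp [CoxeterSystem.alternatingWord]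
  | succ k ih =>
    have hrec := congr(eval (-geomK M s t) $(U_add_one ℝ (k : ℤ)))
    simp only [eval_sub, eval_mul, eval_X, eval_ofNat] at hrec
    rw [CoxeterSystem.alternatingWord_succ', cs.wordProd_cons, map_mul, LinearEquiv.mul_apply, ih]
    push_cast
    rcases Nat.even_or_odd k with hk | hk
    · simp only [hk, ↓reduceIte, Nat.even_add_one, not_true_eq_false, map_add, map_smul,
        hρ.simple_apply_single, geomK_self, add_sub_cancel_right, hrec]
      module
    · simp only [Nat.not_even_iff_odd.mpr hk, ↓reduceIte, Nat.even_add_one, not_false_eq_true,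
        map_add, map_smul, hρ.simple_apply_single, geomK_self, geomK_comm M t s,
        add_sub_cancel_right, hrec]
      module

theorem nonneg_apply_single (hρ : IsGeometricRepresentation cs ρ) (w : W) {i : B}
    (hi : ¬cs.IsRightDescent w i) : 0 ≤ ρ w (single i 1) := by
  induction hw : cs.length w using Nat.strong_induction_on generalizing w i with
  | _ n ih =>
    rcases eq_or_ne w 1 with rfl | hw₁
    · simp
    obtain ⟨t, ht⟩ := cs.exists_rightDescent_of_ne_one hw₁
    have hit : i ≠ t := by rintro rfl; exact hi ht
    obtain ⟨v, k, rfl, hlen, hvi, hvt⟩ := cs.exists_eq_mul_wordProd_alternatingWord w t hi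
    have hk : k ≠ 0 := by rintro rfl; simp [CoxeterSystem.alternatingWord] at ht; exact hvt ht
    have hkM := cs.eq_zero_or_lt_of_eq_mul_wordProd_alternatingWord hi rfl hlen
    have hv : ∀ j ∈ ({i, t} : Set B), 0 ≤ ρ v (single j 1) := by
      rintro j (rfl | rfl)
      exacts [ih _ (by omega) v hvi rfl, ih _ (by omega) v hvt rfl]
    rw [map_mul, LinearEquiv.mul_apply, hρ.wordProd_alternatingWord_apply_single, map_add,
      map_smul, map_smul]
    refine add_nonneg (smul_nonneg ?_ (hv _ ?_)) (smul_nonneg ?_ (hv _ ?_))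
    · exact eval_U_neg_geomK_nonneg hit (by omega) (by omega)
    · split_ifs <;> simp
    · exact eval_U_neg_geomK_nonneg hit (by omega) (by omega)
    · split_ifs <;> simp

theorem apply_single_nonpos (hρ : IsGeometricRepresentation cs ρ) (w : W) {i : B}
    (hi : cs.IsRightDescent w i) : ρ w (single i 1) ≤ 0 := by
  have := hρ.nonneg_apply_single _ (cs.isRightDescent_iff_not_isRightDescent_mul.mp hi)
  rwa [map_mul, LinearEquiv.mul_apply, hρ.simple_apply_single_self, map_neg, neg_nonneg] at this

theorem nonneg_or_nonpos_apply_single (hρ : IsGeometricRepresentation cs ρ) (w : W) (i : B) :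
    0 ≤ ρ w (single i 1) ∨ ρ w (single i 1) ≤ 0 := by
  by_cases hi : cs.IsRightDescent w i
  exacts [Or.inr (hρ.apply_single_nonpos w hi), Or.inl (hρ.nonneg_apply_single w hi)]

theorem eq_single_of_nonneg_of_simple_apply_nonpos (hρ : IsGeometricRepresentation cs ρ)
    {i : B} {v : B →₀ ℝ} (hv : 0 ≤ v) (hsv : ρ (cs.simple i) v ≤ 0) : v = single i (v i) := by
  ext j
  rcases eq_or_ne i j with rfl | hij
  · simp
  · have := hsv j
    rw [hρ.simple_apply, Finsupp.sub_apply, Finsupp.smul_apply, single_eq_of_ne' hij, smul_zero,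
      sub_zero] at this
    rw [single_eq_of_ne' hij]
    exact le_antisymm this (hv j)

theorem apply_single_eq_single_of_simple_apply_nonpos (hρ : IsGeometricRepresentation cs ρ)
    {w : W} {i j : B} (hw : 0 ≤ ρ w (single i 1))
    (hsw : ρ (cs.simple j) (ρ w (single i 1)) ≤ 0) : ρ w (single i 1) = single j 1 := by
  have hβ := hρ.eq_single_of_nonneg_of_simple_apply_nonpos hw hsw
  have hnorm := hρ.geomForm_apply w (single i 1) (single i 1)
  rw [hβ, geomForm_single_single, geomForm_single_single, geomK_self, geomK_self] at hnorm
  have hc₀ : 0 ≤ (ρ w (single i 1)) j := hw j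
  have hc : (ρ w (single i 1)) j = 1 := by nlinarith
  rwa [hc] at hβ

theorem nonneg_apply_inv_of_mem_minCosetReps (hρ : IsGeometricRepresentation cs ρ) {I : Set B}
    {y : W} (hy : y ∈ minCosetReps cs I) {v : B →₀ ℝ} (hvI : v ∈ supported ℝ ℝ I)
    (hv : 0 ≤ v) : 0 ≤ ρ y⁻¹ v :=
  Finsupp.map_nonneg_of_mem_supported (ρ y⁻¹).toLinearMap
    (fun i hi => hρ.nonneg_apply_single y⁻¹
      (cs.isRightDescent_inv_iff.not.mpr (mem_minCosetReps_iff.mp hy i hi))) hvI hv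

end IsGeometricRepresentation

/-- The parabolic property: given the geometric representation `ρ` of `(W,S)`
(the simple root `α_i` is the basis vector `Finsupp.single i 1`, and a simple
reflection acts by `s_i(v) = v - 2 B(v, α_i) α_i`), for `x ∈ ᴵW` and `s ∈ S`,
the following are equivalent: `xs ∉ ᴵW`; `x(α_s) ∈ Δ_I`; `x(α_s)` is a root
lying in the span of `Δ_I`. -/
theorem stmt2 {B W : Type*} [Group W] {M : CoxeterMatrix B} (cs : CoxeterSystem M W)
    (I : Set B)
    (ρ : W →* ((B →₀ ℝ) ≃ₗ[ℝ] (B →₀ ℝ)))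
    (hρ : ∀ (i : B) (v : B →₀ ℝ),
      ρ (cs.simple i) v = v - (2 * geomPair M v i) • Finsupp.single i 1)
    (x : W) (hx : x ∈ minCosetReps cs I) (s : B) :
    List.TFAE
      [ x * cs.simple s ∉ minCosetReps cs I,
        ρ x (Finsupp.single s 1) ∈ (fun r => (Finsupp.single r 1 : B →₀ ℝ)) '' I,
        (∃ (w : W) (j : B), ρ x (Finsupp.single s 1) = ρ w (Finsupp.single j 1)) ∧
          ρ x (Finsupp.single s 1) ∈
            Submodule.span ℝ ((fun r => (Finsupp.single r 1 : B →₀ ℝ)) '' I) ] := by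
  replace hρ : IsGeometricRepresentation cs ρ := hρ
  have hsx : ∀ v, ρ (x * cs.simple s)⁻¹ v = ρ (cs.simple s) (ρ x⁻¹ v) := by
    simp [mul_inv_rev, cs.inv_simple]
  tfae_have 1 → 2 := by
    intro hxs
    simp only [mem_minCosetReps_iff, not_forall, not_not] at hx hxs
    obtain ⟨i, hi, hdesc⟩ := hxs
    have hβ : ρ x⁻¹ (single i 1) = single s 1 :=
      hρ.apply_single_eq_single_of_simple_apply_nonpos
        (hρ.nonneg_apply_single _ (cs.isRightDescent_inv_iff.not.mpr (hx i hi)))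
        (hsx _ ▸ hρ.apply_single_nonpos _ (cs.isRightDescent_inv_iff.mpr hdesc))
    exact ⟨i, hi, by simp [← hβ]⟩
  tfae_have 2 → 3 := by
    rintro ⟨i, hi, hxi⟩
    exact ⟨⟨x, s, rfl⟩, hxi ▸ Submodule.subset_span ⟨i, hi, rfl⟩⟩
  tfae_have 3 → 1 := by
    rintro ⟨⟨w, j, hroot⟩, hspan⟩ hxs
    rw [← supported_eq_span_single] at hspan
    have hneg : ¬0 ≤ -single s (1 : ℝ) := by simp
    rcases hroot ▸ hρ.nonneg_or_nonpos_apply_single w j with hpos | hnonpos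
    · refine hneg ?_
      simpa [hsx, hρ.simple_apply_single_self] using
        hρ.nonneg_apply_inv_of_mem_minCosetReps hxs hspan hpos
    · refine hneg ?_
      simpa using hρ.nonneg_apply_inv_of_mem_minCosetReps hx (Submodule.neg_mem _ hspan)
        (neg_nonneg.mpr hnonpos)
  tfae_finish
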